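/- (Characterization C3 of GLS.) A formula φ is a theorem of the Hilbert system GLS if and only if for every GL-model ⟨W,R,V⟩ and every infinitely descending sequence w₁ R⁻¹ w₂ R⁻¹ w₃ ⋯ in W there is a number i such that V(w_j, φ) = true for every j ≥ i. -/

import Mathlib

/-- Modal formulas: propositional variables, ⊥, →, □. -/
inductive Formula : Type
  | var : ℕ → Formula
  | bot : Formula
  | imp : Formula → Formula → Formula
  | box : Formula → Formula
deriving DecidableEq

/-- Levels of sequents in GLS_seq: first level (⇒) and second level (⇛). -/
inductive SeqLevel : Type
  | one
  | two
deriving DecidableEq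

/-- The set of subformulas of a formula. -/
def Formula.subf : Formula → Finset Formula
  | .var p => {.var p}
  | .bot => {.bot}
  | .imp φ ψ => insert (.imp φ ψ) (φ.subf ∪ ψ.subf)
  | .box φ => insert (.box φ) φ.subf

/-- SF(Ψ,Φ): all subformulas of formulas in Ψ ∪ Φ. -/
def SF (Ψ Φ : Finset Formula) : Finset Formula := (Ψ ∪ Φ).biUnion Formula.subf

def Formula.isBox : Formula → Bool
  | .box _ => true
  | _ => false

def Formula.unbox : Formula → Formula
  | .box φ => φ
  | φ => φ

/-- Θ_□ = {φ : □φ ∈ Θ}. -/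
def boxInv (Θ : Finset Formula) : Finset Formula :=
  (Θ.filter fun ψ => ψ.isBox).image Formula.unbox

/-- The sequent calculus GLS_seq, on sequents of two levels.  The Bool parameter
records whether the cut rule may be used: `GLSSeq true` is provability in GLS_seq,
`GLSSeq false` is cut-free provability.  The first-level fragment is exactly GL_seq. -/
inductive GLSSeq : Bool → SeqLevel → Finset Formula → Finset Formula → Prop
  | init (c lv φ) : GLSSeq c lv {φ} {φ}
  | initBot (c lv) : GLSSeq c lv {Formula.bot} ∅
  | cut {lv Γ Δ} (φ) : GLSSeq true lv Γ (insert φ Δ) → GLSSeq true lv (insert φ Γ) Δ →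
      GLSSeq true lv Γ Δ
  | weak {c lv Γ Δ Γ' Δ'} : Γ ⊆ Γ' → Δ ⊆ Δ' → GLSSeq c lv Γ Δ → GLSSeq c lv Γ' Δ'
  | impL {c lv Γ Δ φ ψ} : GLSSeq c lv Γ (insert φ Δ) → GLSSeq c lv (insert ψ Γ) Δ →
      GLSSeq c lv (insert (.imp φ ψ) Γ) Δ
  | impR {c lv Γ Δ φ ψ} : GLSSeq c lv (insert φ Γ) (insert ψ Δ) →
      GLSSeq c lv Γ (insert (.imp φ ψ) Δ)
  | boxGL {c Γ φ} : GLSSeq c .one (Γ ∪ Γ.image .box ∪ {.box φ}) {φ} →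
      GLSSeq c .one (Γ.image .box) {.box φ}
  | boxL {c Γ Δ} (φ) : GLSSeq c .two (insert φ Γ) Δ → GLSSeq c .two (insert (.box φ) Γ) Δ
  | lift {c Γ Δ} : GLSSeq c .one Γ Δ → GLSSeq c .two Γ Δ

/-- The sequent calculus GL_seq (on first-level sequents only). -/
inductive GLSeq : Bool → Finset Formula → Finset Formula → Prop
  | init (c φ) : GLSeq c {φ} {φ}
  | initBot (c) : GLSeq c {Formula.bot} ∅
  | cut {Γ Δ} (φ) : GLSeq true Γ (insert φ Δ) → GLSeq true (insert φ Γ) Δ → GLSeq true Γ Δ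
  | weak {c Γ Δ Γ' Δ'} : Γ ⊆ Γ' → Δ ⊆ Δ' → GLSeq c Γ Δ → GLSeq c Γ' Δ'
  | impL {c Γ Δ φ ψ} : GLSeq c Γ (insert φ Δ) → GLSeq c (insert ψ Γ) Δ →
      GLSeq c (insert (.imp φ ψ) Γ) Δ
  | impR {c Γ Δ φ ψ} : GLSeq c (insert φ Γ) (insert ψ Δ) → GLSeq c Γ (insert (.imp φ ψ) Δ)
  | boxGL {c Γ φ} : GLSeq c (Γ ∪ Γ.image .box ∪ {.box φ}) {φ} → GLSeq c (Γ.image .box) {.box φ}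

/-- Proof trees of GLS_seq (cut included). -/
inductive GLSTree : SeqLevel → Finset Formula → Finset Formula → Type
  | init (lv φ) : GLSTree lv {φ} {φ}
  | initBot (lv) : GLSTree lv {Formula.bot} ∅
  | cut {lv Γ Δ} (φ) : GLSTree lv Γ (insert φ Δ) → GLSTree lv (insert φ Γ) Δ → GLSTree lv Γ Δ
  | weak {lv Γ Δ} (Γ' Δ' : Finset Formula) : Γ ⊆ Γ' → Δ ⊆ Δ' → GLSTree lv Γ Δ → GLSTree lv Γ' Δ'
  | impL {lv Γ Δ} (φ ψ) : GLSTree lv Γ (insert φ Δ) → GLSTree lv (insert ψ Γ) Δ →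
      GLSTree lv (insert (.imp φ ψ) Γ) Δ
  | impR {lv Γ Δ} (φ ψ) : GLSTree lv (insert φ Γ) (insert ψ Δ) → GLSTree lv Γ (insert (.imp φ ψ) Δ)
  | boxGL (Γ φ) : GLSTree .one (Γ ∪ Γ.image .box ∪ {.box φ}) {φ} → GLSTree .one (Γ.image .box) {.box φ}
  | boxL {Γ Δ} (φ) : GLSTree .two (insert φ Γ) Δ → GLSTree .two (insert (.box φ) Γ) Δ
  | lift {Γ Δ} : GLSTree .one Γ Δ → GLSTree .two Γ Δ

/-- The set of principal formulas of all (□L) rules occurring in a proof tree. -/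
def GLSTree.principals : ∀ {lv Γ Δ}, GLSTree lv Γ Δ → Finset Formula
  | _, _, _, .init _ _ => ∅
  | _, _, _, .initBot _ => ∅
  | _, _, _, .cut _ t₁ t₂ => t₁.principals ∪ t₂.principals
  | _, _, _, .weak _ _ _ _ t => t.principals
  | _, _, _, .impL _ _ t₁ t₂ => t₁.principals ∪ t₂.principals
  | _, _, _, .impR _ _ t => t.principals
  | _, _, _, .boxGL _ _ t => t.principals
  | _, _, _, .boxL φ t => insert (Formula.box φ) t.principals
  | _, _, _, .lift t => t.principals

/-- A proof tree bundled with its level and conclusion. -/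
abbrev PGLSTree : Type :=
  (lv : SeqLevel) × (Γ : Finset Formula) × (Δ : Finset Formula) × GLSTree lv Γ Δ

/-- The set of subproofs of a proof tree (including the tree itself). -/
def GLSTree.subproofs {lv Γ Δ} (t : GLSTree lv Γ Δ) : Set PGLSTree :=
  insert ⟨lv, Γ, Δ, t⟩ <|
    match lv, Γ, Δ, t with
    | _, _, _, .init _ _ => ∅
    | _, _, _, .initBot _ => ∅
    | _, _, _, .cut _ t₁ t₂ => t₁.subproofs ∪ t₂.subproofs
    | _, _, _, .weak _ _ _ _ t₁ => t₁.subproofs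
    | _, _, _, .impL _ _ t₁ t₂ => t₁.subproofs ∪ t₂.subproofs
    | _, _, _, .impR _ _ t₁ => t₁.subproofs
    | _, _, _, .boxGL _ _ t₁ => t₁.subproofs
    | _, _, _, .boxL _ t₁ => t₁.subproofs
    | _, _, _, .lift t₁ => t₁.subproofs

/-- Kripke satisfaction over a frame `R` with atomic valuation `v`. -/
def KSat {W : Type} (R : W → W → Prop) (v : W → ℕ → Prop) : Formula → W → Prop
  | .var p, w => v w p
  | .bot, _ => False
  | .imp φ ψ, w => KSat R v φ w → KSat R v ψ w
  | .box φ, w => ∀ w', R w w' → KSat R v φ w'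

/-- A GL-model: a nonempty, transitive, converse well-founded Kripke model. -/
structure GLModel where
  World : Type
  ne : Nonempty World
  R : World → World → Prop
  trans : Transitive R
  cwf : ∀ f : ℕ → World, ¬ ∀ i, R (f i) (f (i + 1))
  val : World → ℕ → Prop

/-- Truth of a formula at a world of a GL-model. -/
def GLModel.sat (M : GLModel) (w : M.World) (φ : Formula) : Prop := KSat M.R M.val φ w

/-- Truth of a sequent Γ ▸ Δ at a world: some γ ∈ Γ is false or some δ ∈ Δ is true. -/
def GLModel.seqTrue (M : GLModel) (w : M.World) (Γ Δ : Finset Formula) : Prop :=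
  (∃ γ ∈ Γ, ¬ M.sat w γ) ∨ (∃ δ ∈ Δ, M.sat w δ)

/-- w is Σ-reflexive: □α → α is true at w for every □α ∈ Σ. -/
def GLModel.reflexiveFor (M : GLModel) (w : M.World) (S : Finset Formula) : Prop :=
  ∀ α : Formula, Formula.box α ∈ S → M.sat w ((Formula.box α).imp α)

/-- Saturation conditions (→L), (→R) for first-level sequents. -/
def Saturated1 (Γ Δ : Finset Formula) : Prop :=
  (∀ φ ψ : Formula, φ.imp ψ ∈ Γ → φ ∈ Δ ∨ ψ ∈ Γ) ∧
  (∀ φ ψ : Formula, φ.imp ψ ∈ Δ → φ ∈ Γ ∧ ψ ∈ Δ)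

/-- Saturation for second-level sequents: additionally (□L). -/
def Saturated2 (Γ Δ : Finset Formula) : Prop :=
  Saturated1 Γ Δ ∧ ∀ φ : Formula, Formula.box φ ∈ Γ → φ ∈ Γ

def Saturated : SeqLevel → Finset Formula → Finset Formula → Prop
  | .one => Saturated1
  | .two => Saturated2

/-- The Hilbert system GL. -/
inductive GLHilbert : Formula → Prop
  | ax1 (φ ψ : Formula) : GLHilbert (φ.imp (ψ.imp φ))
  | ax2 (φ ψ χ : Formula) :
      GLHilbert ((φ.imp (ψ.imp χ)).imp ((φ.imp ψ).imp (φ.imp χ)))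
  | ax3 (φ : Formula) : GLHilbert (((φ.imp .bot).imp .bot).imp φ)
  | axK (φ ψ : Formula) :
      GLHilbert ((Formula.box (φ.imp ψ)).imp ((Formula.box φ).imp (Formula.box ψ)))
  | axLob (φ : Formula) :
      GLHilbert ((Formula.box ((Formula.box φ).imp φ)).imp (Formula.box φ))
  | mp {φ ψ} : GLHilbert (φ.imp ψ) → GLHilbert φ → GLHilbert ψ
  | nec {φ} : GLHilbert φ → GLHilbert (Formula.box φ)

/-- The Hilbert system GLS: theorems of GL and all □α → α, closed under modus ponens. -/
inductive GLSHilbert : Formula → Prop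
  | gl {φ} : GLHilbert φ → GLSHilbert φ
  | refl (α : Formula) : GLSHilbert ((Formula.box α).imp α)
  | mp {φ ψ} : GLSHilbert (φ.imp ψ) → GLSHilbert φ → GLSHilbert ψ

/-- Conjunction (encoded with → and ⊥) of a list of formulas; empty conjunction is ⊤. -/
def Formula.conj : List Formula → Formula
  | [] => Formula.bot.imp Formula.bot
  | φ :: l => ((φ.imp ((Formula.conj l).imp .bot)).imp .bot)

/-- Membership predicate for the canonical model: saturated first-level sequents over S
that are not cut-free provable in GLS_seq. -/
def W0pred (S : Finset Formula) (s : Finset Formula × Finset Formula) : Prop :=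
  Saturated1 s.1 s.2 ∧ ¬ GLSSeq false SeqLevel.one s.1 s.2 ∧ s.1 ∪ s.2 ⊆ S

/-- Worlds of the canonical model. -/
def W0 (S : Finset Formula) : Type := {s : Finset Formula × Finset Formula // W0pred S s}

/-- Accessibility of the canonical model: (Γ⇒Δ) R₀ (Γ'⇒Δ') iff Γ_□ ⊊ Γ'_□ and Γ_□ ⊆ Γ'. -/
def R0 (S : Finset Formula) (s t : W0 S) : Prop :=
  boxInv s.1.1 ⊂ boxInv t.1.1 ∧ boxInv s.1.1 ⊆ t.1.1

/-- Valuation of the canonical model: p is true at (Γ⇒Δ) iff p ∈ Γ. -/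
def V0 (S : Finset Formula) (s : W0 S) (p : ℕ) : Prop := Formula.var p ∈ s.1.1

/-- The extended set of worlds W = W₀ ∪ ℕ. -/
def Wext (S : Finset Formula) : Type := W0 S ⊕ ℕ

/-- The extended accessibility relation, with distinguished world `wp` in W₀. -/
def Rext (S : Finset Formula) (wp : W0 S) : Wext S → Wext S → Prop
  | Sum.inl x, Sum.inl y => R0 S x y
  | Sum.inr _, Sum.inl y => y = wp ∨ R0 S wp y
  | Sum.inr n, Sum.inr m => m < n
  | Sum.inl _, Sum.inr _ => False

/-- The extended valuation: worlds in ℕ behave like the distinguished world `wp`. -/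
def Vext (S : Finset Formula) (wp : W0 S) : Wext S → ℕ → Prop
  | Sum.inl x, p => V0 S x p
  | Sum.inr _, p => V0 S wp p

/-!
Soundness: GL is valid on transitive, converse well-founded frames, and along a descending chain
an instance `□α → α` fails at most once, because every later world of the chain sees every
earlier one.

Completeness: if `φ ∉ GLS`, then `φ` is not GL-derivable from the reflection instances `□ψ → ψ`
for the boxed subformulas `□ψ` of `φ`. The finite canonical model over the subformulas of `φ`
yields a world `w₀` that refutes `φ` and satisfies those instances. Below `w₀` we hang copies
`0, 1, 2, …` of it, copy `n` seeing `w₀`, everything `w₀` sees, and the copies `m < n`. The new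
frame is still converse well-founded, the copies form a descending chain, and since `w₀` is
reflexive for the boxed subformulas of `φ`, every copy agrees with `w₀` on the subformulas of `φ`;
so `φ` fails all along the chain.
-/

open Filter

namespace Formula

def neg (φ : Formula) : Formula := φ.imp .bot

def and (φ ψ : Formula) : Formula := (φ.imp ψ.neg).neg

theorem mem_subf_self (φ : Formula) : φ ∈ φ.subf := by
  cases φ <;> simp [subf]

theorem subf_subset_of_mem {φ ψ : Formula} (h : ψ ∈ φ.subf) : ψ.subf ⊆ φ.subf := by
  induction φ with
  | var | bot => simp_all [subf]
  | imp α β ihα ihβ =>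
    simp only [subf, Finset.mem_insert, Finset.mem_union] at h
    rcases h with rfl | h | h
    · rfl
    · exact (ihα h).trans (Finset.subset_union_left.trans (Finset.subset_insert _ _))
    · exact (ihβ h).trans (Finset.subset_union_right.trans (Finset.subset_insert _ _))
  | box α ih =>
    simp only [subf, Finset.mem_insert] at h
    rcases h with rfl | h
    · rfl
    · exact (ih h).trans (Finset.subset_insert _ _)

end Formula

def IsSubfClosed (S : Finset Formula) : Prop := ∀ φ ∈ S, φ.subf ⊆ S

namespace IsSubfClosed

variable {S : Finset Formula} {φ ψ : Formula}

theorem left_mem (hS : IsSubfClosed S) (h : φ.imp ψ ∈ S) : φ ∈ S :=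
  hS _ h (by simp [Formula.subf, Formula.mem_subf_self])

theorem right_mem (hS : IsSubfClosed S) (h : φ.imp ψ ∈ S) : ψ ∈ S :=
  hS _ h (by simp [Formula.subf, Formula.mem_subf_self])

theorem box_mem (hS : IsSubfClosed S) (h : φ.box ∈ S) : φ ∈ S :=
  hS _ h (by simp [Formula.subf, Formula.mem_subf_self])

end IsSubfClosed

theorem isSubfClosed_subf (φ : Formula) : IsSubfClosed φ.subf :=
  fun _ => Formula.subf_subset_of_mem

theorem mem_boxInv {Γ : Finset Formula} {φ : Formula} : φ ∈ boxInv Γ ↔ φ.box ∈ Γ := by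
  simp only [boxInv, Finset.mem_image, Finset.mem_filter]
  constructor
  · rintro ⟨ψ, ⟨hψ, hbox⟩, rfl⟩
    cases ψ <;> simp_all [Formula.isBox, Formula.unbox]
  · exact fun h => ⟨φ.box, ⟨h, rfl⟩, rfl⟩

theorem boxInv_mono {Γ Δ : Finset Formula} (h : Γ ⊆ Δ) : boxInv Γ ⊆ boxInv Δ :=
  fun _ hφ => mem_boxInv.2 (h (mem_boxInv.1 hφ))

theorem image_box_boxInv_subset (Γ : Finset Formula) : (boxInv Γ).image Formula.box ⊆ Γ := by
  intro φ hφ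
  obtain ⟨ψ, hψ, rfl⟩ := Finset.mem_image.1 hφ
  exact mem_boxInv.1 hψ

theorem GLHilbert.imp_self (φ : Formula) : GLHilbert (φ.imp φ) :=
  ((ax2 φ (φ.imp φ) φ).mp (ax1 φ (φ.imp φ))).mp (ax1 φ φ)

inductive GLDerivable (Γ : Finset Formula) : Formula → Prop
  | hyp {φ} : φ ∈ Γ → GLDerivable Γ φ
  | thm {φ} : GLHilbert φ → GLDerivable Γ φ
  | mp {φ ψ} : GLDerivable Γ (φ.imp ψ) → GLDerivable Γ φ → GLDerivable Γ ψ

namespace GLDerivable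

variable {Γ Δ : Finset Formula} {φ ψ : Formula}

theorem trans (h : GLDerivable Γ φ) (hΓ : ∀ χ ∈ Γ, GLDerivable Δ χ) : GLDerivable Δ φ := by
  induction h with
  | hyp h => exact hΓ _ h
  | thm h => exact thm h
  | mp _ _ ih₁ ih₂ => exact mp ih₁ ih₂

theorem mono (h : GLDerivable Γ φ) (hΓ : Γ ⊆ Δ) : GLDerivable Δ φ :=
  h.trans fun _ hχ => hyp (hΓ hχ)

theorem mono_insert (h : GLDerivable Γ φ) : GLDerivable (insert ψ Γ) φ :=
  h.mono (Finset.subset_insert _ _)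

theorem weaken (h : GLDerivable Γ ψ) : GLDerivable Γ (φ.imp ψ) :=
  mp (thm (.ax1 ψ φ)) h

theorem deduction (h : GLDerivable (insert φ Γ) ψ) : GLDerivable Γ (φ.imp ψ) := by
  induction h with
  | hyp h =>
    rcases Finset.mem_insert.1 h with rfl | h
    · exact thm (.imp_self _)
    · exact weaken (hyp h)
  | thm h => exact weaken (thm h)
  | mp _ _ ih₁ ih₂ => exact mp (mp (thm (.ax2 _ _ _)) ih₁) ih₂

theorem byContradiction (h : GLDerivable (insert φ.neg Γ) .bot) : GLDerivable Γ φ :=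
  mp (thm (.ax3 φ)) h.deduction

theorem efq (h : GLDerivable Γ .bot) : GLDerivable Γ φ :=
  byContradiction h.mono_insert

theorem and_intro (h₁ : GLDerivable Γ φ) (h₂ : GLDerivable Γ ψ) : GLDerivable Γ (φ.and ψ) :=
  deduction (mp (mp (hyp (Finset.mem_insert_self _ _)) h₁.mono_insert) h₂.mono_insert)

theorem and_left (h : GLDerivable Γ (φ.and ψ)) : GLDerivable Γ φ :=
  byContradiction <| mp h.mono_insert <| deduction <| efq <|
    mp (hyp (Finset.mem_insert_of_mem (Finset.mem_insert_self _ _)))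
      (hyp (Finset.mem_insert_self _ _))

theorem and_right (h : GLDerivable Γ (φ.and ψ)) : GLDerivable Γ ψ :=
  byContradiction <| mp h.mono_insert (weaken (hyp (Finset.mem_insert_self _ _)))

theorem box (h : GLDerivable Γ φ) : GLDerivable (Γ.image Formula.box) φ.box := by
  induction h with
  | hyp h => exact hyp (Finset.mem_image_of_mem _ h)
  | thm h => exact thm h.nec
  | mp _ _ ih₁ ih₂ => exact mp (mp (thm (.axK _ _)) ih₁) ih₂

theorem box_of_box (h : GLDerivable {φ} ψ) (hφ : GLDerivable Γ φ.box) : GLDerivable Γ ψ.box :=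
  h.box.trans (by simpa using hφ)

/-- Löb's axiom applied to `φ ∧ □φ`. -/
theorem box_box (h : GLDerivable Γ φ.box) : GLDerivable Γ φ.box.box := by
  suffices h4 : GLDerivable {φ.box} φ.box.box from h4.trans (by simpa using h)
  have hX : GLDerivable {φ} ((φ.and φ.box).box.imp (φ.and φ.box)) :=
    deduction <| and_intro (hyp (by simp)) <|
      box_of_box (and_left (hyp (Finset.mem_singleton_self _))) (hyp (Finset.mem_insert_self _ _))
  have hLob : GLDerivable {φ.box} (φ.and φ.box).box :=
    mp (thm (.axLob _)) (by simpa using hX.box)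
  exact box_of_box (and_right (hyp (Finset.mem_singleton_self _))) hLob

theorem boxGL (h : GLDerivable (insert φ.box (Γ ∪ Γ.image Formula.box)) φ) :
    GLDerivable (Γ.image Formula.box) φ.box := by
  refine (mp (thm (.axLob φ)) h.deduction.box).trans fun χ hχ => ?_
  simp only [Finset.image_union, Finset.mem_union, Finset.mem_image] at hχ
  rcases hχ with ⟨ψ, hψ, rfl⟩ | ⟨_, ⟨ψ, hψ, rfl⟩, rfl⟩
  · exact hyp (Finset.mem_image_of_mem _ hψ)
  · exact box_box (hyp (Finset.mem_image_of_mem _ hψ))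

theorem toGLS (h : GLDerivable Γ φ) (hΓ : ∀ χ ∈ Γ, GLSHilbert χ) : GLSHilbert φ := by
  induction h with
  | hyp h => exact hΓ _ h
  | thm h => exact .gl h
  | mp _ _ ih₁ ih₂ => exact ih₁.mp ih₂

end GLDerivable

def Consistent (Γ : Finset Formula) : Prop := ¬ GLDerivable Γ .bot

namespace Consistent

variable {Γ Δ : Finset Formula}

theorem mono (h : Consistent Δ) (hΓ : Γ ⊆ Δ) : Consistent Γ :=
  fun hΓ' => h (hΓ'.mono hΓ)

theorem of_not_derivable {φ : Formula} (h : ¬ GLDerivable Γ φ) : Consistent (insert φ.neg Γ) :=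
  fun h' => h h'.byContradiction

theorem insert_or_insert_neg (h : Consistent Γ) (φ : Formula) :
    Consistent (insert φ Γ) ∨ Consistent (insert φ.neg Γ) := by
  by_contra hc
  simp only [Consistent, not_or, not_not] at hc
  exact h (.mp hc.1.deduction hc.2.byContradiction)

theorem exists_superset_decide (h : Consistent Γ) (S : Finset Formula) :
    ∃ H, Γ ⊆ H ∧ Consistent H ∧ ∀ φ ∈ S, φ ∈ H ∨ φ.neg ∈ H := by
  induction S using Finset.induction_on generalizing Γ with
  | empty => exact ⟨Γ, subset_rfl, h, by simp⟩
  | insert φ S _ ih =>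
    obtain ⟨Γ', hΓΓ', hΓ', hφ⟩ : ∃ Γ', Γ ⊆ Γ' ∧ Consistent Γ' ∧ (φ ∈ Γ' ∨ φ.neg ∈ Γ') := by
      rcases h.insert_or_insert_neg φ with hc | hc
      · exact ⟨_, Finset.subset_insert _ _, hc, .inl (Finset.mem_insert_self _ _)⟩
      · exact ⟨_, Finset.subset_insert _ _, hc, .inr (Finset.mem_insert_self _ _)⟩
    obtain ⟨H, hΓ'H, hH, hdec⟩ := ih hΓ'
    refine ⟨H, hΓΓ'.trans hΓ'H, hH, ?_⟩
    simp only [Finset.mem_insert, forall_eq_or_imp]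
    exact ⟨hφ.imp (fun h => hΓ'H h) (fun h => hΓ'H h), hdec⟩

end Consistent

def completion (S Γ : Finset Formula) : Finset Formula := Γ ∪ (S \ Γ).image Formula.neg

/-- A world of the finite canonical model over `S`, given by the formulas of `S` true at it. -/
structure CanonicalWorld (S : Finset Formula) where
  carrier : Finset Formula
  subset : carrier ⊆ S
  consistent : Consistent (completion S carrier)

namespace CanonicalWorld

variable {S : Finset Formula} (w : CanonicalWorld S) {φ ψ : Formula}

/-- The strict growth of `boxInv` along `R` is what makes the frame converse well-founded. -/
def R (w v : CanonicalWorld S) : Prop :=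
  boxInv w.carrier ⊂ boxInv v.carrier ∧ boxInv w.carrier ⊆ v.carrier

def val (w : CanonicalWorld S) (p : ℕ) : Prop := Formula.var p ∈ w.carrier

instance : IsTrans (CanonicalWorld S) R :=
  ⟨fun _ _ _ h₁ h₂ => ⟨h₁.1.trans h₂.1, h₁.1.subset.trans h₂.2⟩⟩

theorem wellFounded_flip_R : WellFounded (flip (R (S := S))) := by
  refine Subrelation.wf (fun {v w} (h : w.R v) => ?_)
    (InvImage.wf (fun w : CanonicalWorld S => (boxInv S).card - (boxInv w.carrier).card)
      wellFounded_lt)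
  have hlt := Finset.card_lt_card h.1
  have hle := Finset.card_le_card (boxInv_mono v.subset)
  show _ - _ < _ - _
  omega

theorem derivable_of_mem (h : φ ∈ w.carrier) : GLDerivable (completion S w.carrier) φ :=
  .hyp (Finset.mem_union_left _ h)

theorem derivable_neg_of_not_mem (hφ : φ ∈ S) (h : φ ∉ w.carrier) :
    GLDerivable (completion S w.carrier) φ.neg :=
  .hyp (Finset.mem_union_right _ (Finset.mem_image_of_mem _ (Finset.mem_sdiff.2 ⟨hφ, h⟩)))

theorem mem_of_derivable {H : Finset Formula} (hH : Consistent H)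
    (hwH : completion S w.carrier ⊆ H) (hφ : φ ∈ S) (h : GLDerivable H φ) : φ ∈ w.carrier := by
  by_contra hn
  exact hH (.mp ((w.derivable_neg_of_not_mem hφ hn).mono hwH) h)

theorem mem_iff_derivable (hφ : φ ∈ S) :
    φ ∈ w.carrier ↔ GLDerivable (completion S w.carrier) φ :=
  ⟨w.derivable_of_mem, w.mem_of_derivable w.consistent subset_rfl hφ⟩

theorem bot_not_mem : Formula.bot ∉ w.carrier :=
  fun h => w.consistent (w.derivable_of_mem h)

theorem imp_mem_iff (hS : IsSubfClosed S) (h : φ.imp ψ ∈ S) :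
    φ.imp ψ ∈ w.carrier ↔ (φ ∈ w.carrier → ψ ∈ w.carrier) := by
  have hφ := hS.left_mem h
  have hψ := hS.right_mem h
  refine ⟨fun himp hφw => (w.mem_iff_derivable hψ).2
    (.mp (w.derivable_of_mem himp) (w.derivable_of_mem hφw)), fun himp => ?_⟩
  rw [w.mem_iff_derivable h]
  by_cases hφw : φ ∈ w.carrier
  · exact (w.derivable_of_mem (himp hφw)).weaken
  · exact .deduction <| .efq <|
      .mp (w.derivable_neg_of_not_mem hφ hφw).mono_insert (.hyp (Finset.mem_insert_self _ _))

theorem boxInv_subset (hS : IsSubfClosed S) : boxInv w.carrier ⊆ S :=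
  fun _ h => hS.box_mem (w.subset (mem_boxInv.1 h))

theorem subset_of_consistent {Γ : Finset Formula} (hΓS : Γ ⊆ S)
    (h : Consistent (completion S w.carrier ∪ Γ)) : Γ ⊆ w.carrier :=
  fun _ hχ => w.mem_of_derivable h Finset.subset_union_left (hΓS hχ)
    (.hyp (Finset.mem_union_right _ hχ))

theorem exists_of_not_derivable (S : Finset Formula) {Γ : Finset Formula}
    (h : ¬ GLDerivable Γ φ) :
    ∃ w : CanonicalWorld S, Consistent (completion S w.carrier ∪ Γ) ∧ φ ∉ w.carrier := by
  obtain ⟨H, hΓH, hH, hdec⟩ := (Consistent.of_not_derivable h).exists_superset_decide S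
  have hcompl : completion S (S.filter (· ∈ H)) ⊆ H := by
    intro χ hχ
    simp only [completion, Finset.mem_union, Finset.mem_filter, Finset.mem_image,
      Finset.mem_sdiff] at hχ
    rcases hχ with ⟨_, hχ⟩ | ⟨ψ, ⟨hψS, hψ⟩, rfl⟩
    · exact hχ
    · exact (hdec ψ hψS).resolve_left fun h => hψ ⟨hψS, h⟩
  refine ⟨⟨S.filter (· ∈ H), Finset.filter_subset _ _, hH.mono hcompl⟩,
    hH.mono (Finset.union_subset hcompl ((Finset.subset_insert _ _).trans hΓH)), fun hφ => hH ?_⟩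
  exact .mp (.hyp (hΓH (Finset.mem_insert_self _ _))) (.hyp (Finset.mem_filter.1 hφ).2)

theorem exists_R_not_mem (hS : IsSubfClosed S) (hφ : φ.box ∈ S) (h : φ.box ∉ w.carrier) :
    ∃ v, w.R v ∧ φ ∉ v.carrier := by
  set B := boxInv w.carrier
  have hnd : ¬ GLDerivable (insert φ.box (B ∪ B.image Formula.box)) φ := fun hd =>
    h (w.mem_of_derivable w.consistent subset_rfl hφ
      (hd.boxGL.mono ((image_box_boxInv_subset _).trans Finset.subset_union_left)))
  obtain ⟨v, hv, hφv⟩ := exists_of_not_derivable S hnd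
  have hBv := v.subset_of_consistent (Finset.insert_subset hφ (Finset.union_subset
    (w.boxInv_subset hS) ((image_box_boxInv_subset _).trans w.subset))) hv
  have hBboxInv : B ⊆ boxInv v.carrier := fun _ hψ => mem_boxInv.2
    (hBv (Finset.mem_insert_of_mem (Finset.mem_union_right _ (Finset.mem_image_of_mem _ hψ))))
  refine ⟨v, ⟨Finset.ssubset_iff_of_subset hBboxInv |>.2 ⟨φ, ?_, ?_⟩, ?_⟩, hφv⟩
  · exact mem_boxInv.2 (hBv (Finset.mem_insert_self _ _))
  · exact fun hφB => h (mem_boxInv.1 hφB)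
  · exact fun _ hψ => hBv (Finset.mem_insert_of_mem (Finset.mem_union_left _ hψ))

theorem box_mem_iff (hS : IsSubfClosed S) (h : φ.box ∈ S) :
    φ.box ∈ w.carrier ↔ ∀ v, w.R v → φ ∈ v.carrier := by
  refine ⟨fun hw v hv => hv.2 (mem_boxInv.2 hw), fun hall => ?_⟩
  by_contra hn
  obtain ⟨v, hv, hφv⟩ := w.exists_R_not_mem hS h hn
  exact hφv (hall v hv)

theorem mem_iff_ksat (hS : IsSubfClosed S) (hφ : φ ∈ S) (w : CanonicalWorld S) :
    φ ∈ w.carrier ↔ KSat R val φ w := by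
  induction φ generalizing w with
  | var p => rfl
  | bot => simpa [KSat] using w.bot_not_mem
  | imp φ ψ ihφ ihψ =>
    rw [w.imp_mem_iff hS hφ, ihφ (hS.left_mem hφ), ihψ (hS.right_mem hφ)]
    rfl
  | box φ ih =>
    rw [w.box_mem_iff hS hφ]
    simp only [KSat, ih (hS.box_mem hφ)]

end CanonicalWorld

def reflAxioms (Φ : Finset Formula) : Finset Formula :=
  (Φ.filter (·.isBox)).image fun β => β.imp β.unbox

theorem imp_mem_reflAxioms {Φ : Finset Formula} {φ : Formula} (h : φ.box ∈ Φ) :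
    φ.box.imp φ ∈ reflAxioms Φ :=
  Finset.mem_image.2 ⟨φ.box, Finset.mem_filter.2 ⟨h, rfl⟩, rfl⟩

theorem GLSHilbert.of_mem_reflAxioms {Φ : Finset Formula} {χ : Formula}
    (h : χ ∈ reflAxioms Φ) : GLSHilbert χ := by
  obtain ⟨β, hβ, rfl⟩ := Finset.mem_image.1 h
  have hbox := (Finset.mem_filter.1 hβ).2
  cases β <;> first | exact .refl _ | cases hbox

theorem CanonicalWorld.exists_reflexive_refutation {φ : Formula} (h : ¬ GLSHilbert φ) :
    ∃ w : CanonicalWorld φ.subf,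
      (∀ α, α.box ∈ φ.subf → KSat R val α.box w → KSat R val α w) ∧ ¬ KSat R val φ w := by
  have hS := isSubfClosed_subf φ
  obtain ⟨w, hw, hφw⟩ := exists_of_not_derivable φ.subf (Γ := reflAxioms φ.subf)
    fun hd => h (hd.toGLS fun _ => GLSHilbert.of_mem_reflAxioms)
  refine ⟨w, fun α hα hbox => ?_, fun hφ => hφw ((w.mem_iff_ksat hS φ.mem_subf_self).2 hφ)⟩
  rw [← w.mem_iff_ksat hS hα] at hbox
  rw [← w.mem_iff_ksat hS (hS.box_mem hα)]
  exact w.mem_of_derivable hw Finset.subset_union_left (hS.box_mem hα)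
    (.mp (.hyp (Finset.mem_union_right _ (imp_mem_reflAxioms hα)))
      (.hyp (Finset.mem_union_left _ (Finset.mem_union_left _ hbox))))

namespace GLModel

def ofWellFounded {W : Type} [Nonempty W] (R : W → W → Prop) [IsTrans W R]
    (hR : WellFounded (flip R)) (V : W → ℕ → Prop) : GLModel where
  World := W
  ne := ‹_›
  R := R
  trans := fun _ _ _ => _root_.trans
  cwf f hf := (wellFounded_iff_isEmpty_descending_chain.1 hR).false ⟨f, hf⟩
  val := V

theorem wellFounded_flip (M : GLModel) : WellFounded (flip M.R) :=
  wellFounded_iff_isEmpty_descending_chain.2 ⟨fun f => M.cwf f.1 f.2⟩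

variable (M : GLModel) {φ : Formula}

theorem sat_box_of_sat_box_imp {w : M.World} (h : M.sat w ((φ.box.imp φ).box)) :
    M.sat w φ.box := by
  intro x hx
  induction x using M.wellFounded_flip.induction with
  | _ x ih => exact h x hx fun y hy => ih y hy (M.trans hx hy)

theorem sat_of_glHilbert (h : GLHilbert φ) (w : M.World) : M.sat w φ := by
  induction h generalizing w with
  | ax1 => exact fun h _ => h
  | ax2 => exact fun h₁ h₂ h₃ => h₁ h₃ (h₂ h₃)
  | ax3 => exact fun h => Classical.byContradiction h
  | axK => exact fun h₁ h₂ x hx => h₁ x hx (h₂ x hx)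
  | axLob => exact M.sat_box_of_sat_box_imp
  | mp _ _ ih₁ ih₂ => exact ih₁ w (ih₂ w)
  | nec _ ih => exact fun x _ => ih x

theorem eventually_sat_of_glsHilbert (h : GLSHilbert φ) {f : ℕ → M.World}
    (hf : ∀ i, M.R (f (i + 1)) (f i)) : ∀ᶠ j in atTop, M.sat (f j) φ := by
  induction h with
  | gl h => exact .of_forall fun j => M.sat_of_glHilbert h (f j)
  | refl α =>
    by_cases hall : ∀ j, M.sat (f j) (α.box.imp α)
    · exact .of_forall hall
    · push Not at hall
      obtain ⟨j₀, hj₀⟩ := hall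
      have : IsTrans M.World (flip M.R) := ⟨fun _ _ _ h₁ h₂ => M.trans h₂ h₁⟩
      filter_upwards [eventually_gt_atTop j₀] with j hj hbox
      exact (hj₀ fun _ => hbox _ (Nat.rel_of_forall_rel_succ_of_lt (flip M.R) hf hj)).elim
  | mp _ _ ih₁ ih₂ => exact (ih₁.and ih₂).mono fun _ h => h.1 h.2

end GLModel

section DescendingChain

variable {W : Type} (R : W → W → Prop) (w₀ : W)

def chainRel : W ⊕ ℕ → W ⊕ ℕ → Prop
  | .inl x, .inl y => R x y
  | .inr _, .inl y => y = w₀ ∨ R w₀ y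
  | .inr n, .inr m => m < n
  | .inl _, .inr _ => False

instance [IsTrans W R] : IsTrans (W ⊕ ℕ) (chainRel R w₀) := by
  refine ⟨?_⟩
  rintro (x | n) (y | m) (z | k) h₁ h₂ <;> simp only [chainRel] at h₁ h₂ ⊢
  · exact _root_.trans h₁ h₂
  · rcases h₁ with rfl | h₁
    · exact .inr h₂
    · exact .inr (_root_.trans h₁ h₂)
  · exact h₂
  · exact h₂.trans h₁

theorem wellFounded_flip_chainRel (hR : WellFounded (flip R)) :
    WellFounded (flip (chainRel R w₀)) := by
  refine Subrelation.wf (fun {a b} hab => ?_) (Sum.lex_wf hR wellFounded_lt)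
  rcases a with x | n <;> rcases b with y | m
  · exact .inl hab
  · exact .sep _ _
  · exact hab.elim
  · exact .inr hab

variable (V : W → ℕ → Prop)

theorem ksat_chainRel_inl (φ : Formula) (x : W) :
    KSat (chainRel R w₀) (Sum.elim V fun _ => V w₀) φ (.inl x) ↔ KSat R V φ x := by
  induction φ generalizing x with
  | var | bot => rfl
  | imp φ ψ ihφ ihψ => exact imp_congr (ihφ x) (ihψ x)
  | box φ ih =>
    refine ⟨fun h y hy => (ih y).1 (h (.inl y) hy), ?_⟩
    rintro h (y | m) hxy
    · exact (ih y).2 (h y hxy)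
    · exact hxy.elim

theorem ksat_chainRel_inr {Φ : Finset Formula} (hΦ : IsSubfClosed Φ)
    (hrefl : ∀ α, α.box ∈ Φ → KSat R V α.box w₀ → KSat R V α w₀)
    {φ : Formula} (hφ : φ ∈ Φ) (n : ℕ) :
    KSat (chainRel R w₀) (Sum.elim V fun _ => V w₀) φ (.inr n) ↔ KSat R V φ w₀ := by
  induction φ generalizing n with
  | var | bot => rfl
  | imp φ ψ ihφ ihψ => exact imp_congr (ihφ (hΦ.left_mem hφ) n) (ihψ (hΦ.right_mem hφ) n)
  | box φ ih =>
    refine ⟨fun h y hy => (ksat_chainRel_inl R w₀ V φ y).1 (h (.inl y) (.inr hy)), ?_⟩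
    rintro h (y | m) hny
    · rcases hny with rfl | hny
      · exact (ksat_chainRel_inl R _ V φ _).2 (hrefl φ hφ h)
      · exact (ksat_chainRel_inl R w₀ V φ y).2 (h y hny)
    · exact (ih (hΦ.box_mem hφ) m).2 (hrefl φ hφ h)

theorem exists_descending_refutation [IsTrans W R] (hR : WellFounded (flip R))
    {Φ : Finset Formula} (hΦ : IsSubfClosed Φ)
    (hrefl : ∀ α, α.box ∈ Φ → KSat R V α.box w₀ → KSat R V α w₀)
    {φ : Formula} (hφ : φ ∈ Φ) (h : ¬ KSat R V φ w₀) :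
    ∃ (M : GLModel) (f : ℕ → M.World), (∀ i, M.R (f (i + 1)) (f i)) ∧ ∀ j, ¬ M.sat (f j) φ :=
  ⟨.ofWellFounded (chainRel R w₀) (wellFounded_flip_chainRel R w₀ hR)
      (Sum.elim V fun _ => V w₀),
    Sum.inr, fun i => Nat.lt_succ_self i,
    fun j hj => h ((ksat_chainRel_inr R w₀ V hΦ hrefl hφ j).1 hj)⟩

end DescendingChain

/-- Characterization C3: φ is a theorem of GLS iff on every infinitely descending
sequence of every GL-model, φ is eventually always true. -/
theorem gls_characterization_c3 (φ : Formula) :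
    GLSHilbert φ ↔
      ∀ (M : GLModel) (f : ℕ → M.World), (∀ i, M.R (f (i + 1)) (f i)) →
        ∃ i, ∀ j, i ≤ j → M.sat (f j) φ := by
  refine ⟨fun h M f hf => eventually_atTop.1 (M.eventually_sat_of_glsHilbert h hf),
    fun hsem => ?_⟩
  by_contra hφ
  obtain ⟨w, hrefl, hw⟩ := CanonicalWorld.exists_reflexive_refutation hφ
  obtain ⟨M, f, hf, hfφ⟩ := exists_descending_refutation CanonicalWorld.R w
    CanonicalWorld.val CanonicalWorld.wellFounded_flip_R (isSubfClosed_subf φ) hrefl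
    φ.mem_subf_self hw
  obtain ⟨i, hi⟩ := hsem M f hf
  exact hfφ i (hi i le_rfl)
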